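/- arXiv:2603.12805 — 4 statements merged into one kernel-verified Lean document; each statement's English description precedes it below -/
import Mathlib

section
/- Let b¹, …, bⁿ ∈ ℝ^m, x¹,…,xⁿ ∈ ℝ, z¹,…,zⁿ ∈ ℝ, let ℓ : {1,…,n} → {1,…,L} be a surjective cell-assignment map, and let r : {1,…,L} → {1,…,n} satisfy ℓ(r(ℓ')) = ℓ' for each ℓ'. Let u¹,…,u^L, v¹,…,v^L ∈ ℝ^m be such that for all i, j ∈ {1,…,n}: ⟨u^{ℓ(j)}, b^i − b^j⟩ + x^j + z^j ≤ x^i + z^i and ⟨v^{ℓ(j)}, b^i − b^j⟩ + z^j ≤ z^i, with both inequalities holding with equality whenever ℓ(i) = ℓ(j). Define the policy φ(b) := max_{ℓ'∈{1,…,L}} ( ⟨u^{ℓ'}, b − b^{r(ℓ')}⟩ + x^{r(ℓ')} + z^{r(ℓ')} ) − max_{ℓ'∈{1,…,L}} ( ⟨v^{ℓ'}, b − b^{r(ℓ')}⟩ + z^{r(ℓ')} ). Then for every cell index ℓ̄ and every convex combination b̂ = Σ_{i : ℓ(i)=ℓ̄} λ_i b^i (λ_i ≥ 0, Σ λ_i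 = 1), one has φ(b̂) = Σ_{i : ℓ(i)=ℓ̄} λ_i x^i. In particular φ(b^i) = x^i for every training point i. -/
open Matrix

/-- Recovery property (Part 2) of Theorem 1 of the paper: the PLDC policy built from a
feasible solution of the training problem whose inequalities are tight within each cell
recovers the training values on convex combinations of each cell's training points. -/
theorem stmt_2 (m n L : ℕ) (hL : 0 < L)
    (b : Fin n → (Fin m → ℝ)) (x z : Fin n → ℝ)
    (ℓ : Fin n → Fin L) (hsurj : Function.Surjective ℓ)
    (r : Fin L → Fin n) (hr : ∀ ℓ', ℓ (r ℓ') = ℓ')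
    (u v : Fin L → (Fin m → ℝ))
    (hu : ∀ i j, u (ℓ j) ⬝ᵥ (b i - b j) + x j + z j ≤ x i + z i)
    (hv : ∀ i j, v (ℓ j) ⬝ᵥ (b i - b j) + z j ≤ z i)
    (hu_eq : ∀ i j, ℓ i = ℓ j → u (ℓ j) ⬝ᵥ (b i - b j) + x j + z j = x i + z i)
    (hv_eq : ∀ i j, ℓ i = ℓ j → v (ℓ j) ⬝ᵥ (b i - b j) + z j = z i) :
    ∀ (lbar : Fin L) (lam : Fin n → ℝ) (bhat : Fin m → ℝ),
      (∀ i, 0 ≤ lam i) →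
      (∑ i ∈ Finset.univ.filter (fun i => ℓ i = lbar), lam i) = 1 →
      bhat = ∑ i ∈ Finset.univ.filter (fun i => ℓ i = lbar), lam i • b i →
      (Finset.univ.sup' (Finset.univ_nonempty_iff.mpr ⟨⟨0, hL⟩⟩)
          (fun ℓ' => u ℓ' ⬝ᵥ (bhat - b (r ℓ')) + x (r ℓ') + z (r ℓ')))
        - (Finset.univ.sup' (Finset.univ_nonempty_iff.mpr ⟨⟨0, hL⟩⟩)
          (fun ℓ' => v ℓ' ⬝ᵥ (bhat - b (r ℓ')) + z (r ℓ')))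
      = ∑ i ∈ Finset.univ.filter (fun i => ℓ i = lbar), lam i * x i := by
  intro lbar lam bhat hlam hsum hbhat
  set S := Finset.univ.filter (fun i => ℓ i = lbar) with hS
  have hmem : ∀ i ∈ S, ℓ i = lbar := by
    intro i hi; simpa [hS] using hi
  have hdot : ∀ (w : Fin m → ℝ) (j : Fin n),
      w ⬝ᵥ (bhat - b j) = ∑ i ∈ S, lam i * (w ⬝ᵥ (b i - b j)) := by
    intro w j
    have h1 : bhat - b j = ∑ i ∈ S, lam i • (b i - b j) := by
      simp only [smul_sub, Finset.sum_sub_distrib, ← Finset.sum_smul, hsum, one_smul, hbhat]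
    rw [h1]
    simp only [dotProduct, Finset.sum_apply, Pi.smul_apply, Pi.sub_apply,
      smul_eq_mul, Finset.mul_sum]
    rw [Finset.sum_comm]
    exact Finset.sum_congr rfl fun i _ => Finset.sum_congr rfl fun k _ => by ring
  have hexpand : ∀ (w : Fin m → ℝ) (j : Fin n) (c : ℝ),
      w ⬝ᵥ (bhat - b j) + c = ∑ i ∈ S, lam i * (w ⬝ᵥ (b i - b j) + c) := by
    intro w j c
    rw [hdot]
    have : (c : ℝ) = ∑ i ∈ S, lam i * c := by
      rw [← Finset.sum_mul, hsum, one_mul]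
    rw [Finset.sum_congr rfl (fun i _ => mul_add (lam i) _ c), Finset.sum_add_distrib]
    rw [← this]
  -- value of first sup'
  have hsup1 :
      (Finset.univ.sup' (Finset.univ_nonempty_iff.mpr ⟨⟨0, hL⟩⟩)
          (fun ℓ' => u ℓ' ⬝ᵥ (bhat - b (r ℓ')) + x (r ℓ') + z (r ℓ')))
        = ∑ i ∈ S, lam i * (x i + z i) := by
    apply le_antisymm
    · apply Finset.sup'_le
      intro ℓ' _
      have h := hexpand (u ℓ') (r ℓ') (x (r ℓ') + z (r ℓ'))
      rw [add_assoc, h]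
      apply Finset.sum_le_sum
      intro i hi
      apply mul_le_mul_of_nonneg_left _ (hlam i)
      have := hu i (r ℓ')
      rw [hr] at this
      linarith
    · apply Finset.le_sup' (f := fun ℓ' => u ℓ' ⬝ᵥ (bhat - b (r ℓ')) + x (r ℓ') + z (r ℓ'))
        (b := lbar) (Finset.mem_univ lbar) |>.trans_eq' ?_
      have h := hexpand (u lbar) (r lbar) (x (r lbar) + z (r lbar))
      rw [add_assoc, h]
      apply Finset.sum_congr rfl
      intro i hi
      congr 1
      have heq := hu_eq i (r lbar) (by rw [hmem i hi, hr])
      rw [hr] at heq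
      linarith
  have hsup2 :
      (Finset.univ.sup' (Finset.univ_nonempty_iff.mpr ⟨⟨0, hL⟩⟩)
          (fun ℓ' => v ℓ' ⬝ᵥ (bhat - b (r ℓ')) + z (r ℓ')))
        = ∑ i ∈ S, lam i * z i := by
    apply le_antisymm
    · apply Finset.sup'_le
      intro ℓ' _
      rw [hexpand]
      apply Finset.sum_le_sum
      intro i hi
      apply mul_le_mul_of_nonneg_left _ (hlam i)
      have := hv i (r ℓ')
      rw [hr] at this
      linarith
    · apply Finset.le_sup' (f := fun ℓ' => v ℓ' ⬝ᵥ (bhat - b (r ℓ')) + z (r ℓ'))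
        (b := lbar) (Finset.mem_univ lbar) |>.trans_eq' ?_
      rw [hexpand]
      apply Finset.sum_congr rfl
      intro i hi
      congr 1
      have heq := hv_eq i (r lbar) (by rw [hmem i hi, hr])
      rw [hr] at heq
      linarith
  rw [hsup1, hsup2, ← Finset.sum_sub_distrib]
  apply Finset.sum_congr rfl
  intro i _
  ring
end

section
/- Let b¹, …, bⁿ ∈ ℝ^m and let C¹, …, C^L be a partition of the index set {1,…,n} (each C^ℓ nonempty). Let φ₁, φ₂ : ℝ^m → ℝ be convex functions such that for each ℓ, both φ₁ and φ₂ coincide with affine functions on the convex hull Conv{b^i : i ∈ C^ℓ}, and set x*(b) := φ₁(b) − φ₂(b). Then there exist vectors u¹,…,u^L, v¹,…,v^L ∈ ℝ^m, numbers z¹,…,zⁿ ∈ ℝ, and representatives r : {1,…,L} → {1,…,n} with r(ℓ) ∈ C^ℓ, such that: (i) for all i, j ∈ {1,…,n} (writing ℓ(j) for the index of the cell containing j) the inequalities ⟨u^{ℓ(j)}, b^i − b^j⟩ + x*(b^j) + z^j ≤ x*(b^i) + z^i and ⟨v^{ℓ(j)}, b^i − b^j⟩ + z^j ≤ z^i hold;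 and (ii) the policy φ(b) := max_{ℓ'} ( ⟨u^{ℓ'}, b − b^{r(ℓ')}⟩ + x*(b^{r(ℓ')}) + z^{r(ℓ')} ) − max_{ℓ'} ( ⟨v^{ℓ'}, b − b^{r(ℓ')}⟩ + z^{r(ℓ')} ) satisfies φ(b) = x*(b) for every b ∈ Conv{b^i : i ∈ C^ℓ} and every ℓ ∈ {1,…,L}. -/
/-!
A convex function on `ℝ^m` has a subgradient at every point (separate the graph point from the
open strict epigraph). If the function is affine on the hull of a cell, a subgradient taken at
the barycenter of the cell is a subgradient at every point of the hull: the subgradient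
inequality at the vertices, averaged, is an equality, so it is an equality at each vertex and
hence on the hull. Thus `u` and `v` can be chosen as common subgradients of `φ₁` and `φ₂` on
each cell, with `z i = φ₂ (b i)`. The maxima of the resulting supporting affine minorants
recover `φ₁` and `φ₂` on each hull, and their difference recovers `x*`.
-/

open Set

section Subgradient

variable {E : Type*} [AddCommGroup E] [Module ℝ E]

def HasSubgradientAt (φ : E → ℝ) (f : E →ₗ[ℝ] ℝ) (x : E) : Prop :=
  ∀ y, f (y - x) ≤ φ y - φ x

theorem HasSubgradientAt.apply_sub_eq {φ : E → ℝ} {f : E →ₗ[ℝ] ℝ} {x y : E}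
    (hx : HasSubgradientAt φ f x) (hy : HasSubgradientAt φ f y) : f (y - x) = φ y - φ x := by
  have hyx := hy x
  rw [← neg_sub, map_neg] at hyx
  linarith [hx y]

theorem ConvexOn.exists_hasSubgradientAt [TopologicalSpace E] [IsTopologicalAddGroup E]
    [ContinuousSMul ℝ E] [LocallyConvexSpace ℝ E] {φ : E → ℝ} (hφ : ConvexOn ℝ univ φ)
    (hcont : Continuous φ) (x : E) : ∃ f : E →ₗ[ℝ] ℝ, HasSubgradientAt φ f x := by
  obtain ⟨g, hg⟩ := geometric_hahn_banach_open_point (s := {p : E × ℝ | φ p.1 < p.2})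
    (x := (x, φ x)) (by simpa using hφ.convex_strict_epigraph)
    (isOpen_lt (hcont.comp continuous_fst) continuous_snd) (lt_irrefl (φ x))
  -- `g` is negative in the vertical direction; `-c⁻¹ • g` restricted to `E × {0}` is the subgradient
  set c := g (0, 1)
  have hsplit (y : E) (t : ℝ) : g (y, t) = g (y, 0) + t * c := by
    rw [← smul_eq_mul, ← map_smul, ← map_add]
    simp
  have hlt (y : E) (t : ℝ) (ht : φ y < t) : g (y - x, 0) < (φ x - t) * c := by
    have hsub : g (y - x, 0) = g (y, 0) - g (x, 0) := by
      rw [← map_sub, Prod.mk_sub_mk, sub_zero]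
    have := hg (y, t) ht
    rw [hsplit, hsplit x] at this
    linarith
  have hc : c < 0 := by
    have := hlt x (φ x + 1) (by linarith)
    rw [sub_self, Prod.mk_zero_zero, map_zero] at this
    linarith
  refine ⟨-c⁻¹ • (g : E × ℝ →ₗ[ℝ] ℝ).comp (LinearMap.inl ℝ E ℝ),
    fun y => le_of_forall_gt fun t ht => ?_⟩
  have := hlt y (t + φ x) (by linarith)
  simp only [LinearMap.smul_apply, LinearMap.comp_apply, LinearMap.inl_apply,
    ContinuousLinearMap.coe_coe, smul_eq_mul, neg_mul, ← div_eq_inv_mul]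
  rw [neg_lt, lt_div_iff_of_neg hc]
  linarith

theorem hasSubgradientAt_of_mem_convexHull {ι : Type*} {φ : E → ℝ} {b : ι → E} {s : Finset ι}
    (hs : s.Nonempty) {a f : E →ₗ[ℝ] ℝ} {c : ℝ}
    (haff : ∀ p ∈ convexHull ℝ (b '' s), φ p = a p + c)
    (hf : HasSubgradientAt φ f (s.centerMass (fun _ => (1 : ℝ)) b)) {x : E}
    (hx : x ∈ convexHull ℝ (b '' s)) : HasSubgradientAt φ f x := by
  set x₀ := s.centerMass (fun _ => (1 : ℝ)) b
  have hvert {i} (hi : i ∈ s) : b i ∈ convexHull ℝ (b '' s) :=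
    subset_convexHull ℝ _ (mem_image_of_mem b hi)
  have hx₀ : x₀ ∈ convexHull ℝ (b '' s) :=
    s.centerMass_mem_convexHull (fun _ _ => zero_le_one) (by simpa using hs.card_pos)
      (fun i hi => mem_image_of_mem b hi)
  -- `a - f` is nonnegative on the `b i - x₀` and sums to zero over them, so it vanishes on each
  have hnonneg : ∀ i ∈ s, 0 ≤ (a - f) (b i - x₀) := by
    intro i hi
    have := hf (b i)
    rw [haff _ (hvert hi), haff _ hx₀] at this
    simp only [LinearMap.sub_apply, map_sub] at this ⊢
    linarith
  have hsum : ∑ i ∈ s, (a - f) (b i - x₀) = 0 := by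
    have hcard : (s.card : ℝ) ≠ 0 := by simpa using hs.ne_empty
    rw [← map_sum, Finset.sum_sub_distrib, Finset.sum_const, ← Nat.cast_smul_eq_nsmul ℝ]
    simp [x₀, Finset.centerMass, smul_smul, hcard]
  have hzero := (Finset.sum_eq_zero_iff_of_nonneg hnonneg).1 hsum
  have hhull : convexHull ℝ (b '' s) ⊆ {p | (a - f) p = (a - f) x₀} := by
    refine convexHull_min ?_ (convex_hyperplane (a - f).isLinear _)
    rintro _ ⟨i, hi, rfl⟩
    have := hzero i hi
    simp only [LinearMap.sub_apply, map_sub, mem_ofPred_eq] at this ⊢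
    linarith
  intro y
  have hxa : (a - f) x = (a - f) x₀ := hhull hx
  have := hf y
  simp only [LinearMap.sub_apply, map_sub] at hxa this ⊢
  rw [haff _ hx₀] at this
  rw [haff _ hx]
  linarith

theorem Finset.sup'_apply_sub_add_eq_of_hasSubgradientAt {ι : Type*} {φ : E → ℝ}
    {s : Finset ι} (hs : s.Nonempty) {f : ι → E →ₗ[ℝ] ℝ} {x : ι → E}
    (hsub : ∀ i ∈ s, HasSubgradientAt φ (f i) (x i)) {i : ι} (hi : i ∈ s) {p : E}
    (hp : HasSubgradientAt φ (f i) p) :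
    s.sup' hs (fun j => f j (p - x j) + φ (x j)) = φ p :=
  le_antisymm (Finset.sup'_le _ _ fun j hj => by linarith [hsub j hj p])
    (Finset.le_sup'_of_le _ hi (by rw [(hsub i hi).apply_sub_eq hp, sub_add_cancel]))

end Subgradient

theorem ConvexOn.exists_dotProduct_hasSubgradientAt_convexHull {n ι : Type*} [Fintype n]
    [DecidableEq n] {φ : (n → ℝ) → ℝ} (hφ : ConvexOn ℝ univ φ) {b : ι → n → ℝ}
    {s : Finset ι} (hs : s.Nonempty)
    (haff : ∃ (a : n → ℝ) (c : ℝ), ∀ p ∈ convexHull ℝ (b '' s), φ p = a ⬝ᵥ p + c) :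
    ∃ u : n → ℝ, ∀ x ∈ convexHull ℝ (b '' s), HasSubgradientAt φ (dotProductEquiv ℝ n u) x := by
  obtain ⟨a, c, haff⟩ := haff
  obtain ⟨f, hf⟩ := hφ.exists_hasSubgradientAt hφ.locallyLipschitz.continuous
    (s.centerMass (fun _ => (1 : ℝ)) b)
  refine ⟨(dotProductEquiv ℝ n).symm f, fun x hx => ?_⟩
  rw [LinearEquiv.apply_symm_apply]
  exact hasSubgradientAt_of_mem_convexHull hs (a := dotProductEquiv ℝ n a) haff hf hx

theorem stmt_3_general (m n L : ℕ) (hL : 0 < L)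
    (b : Fin n → (Fin m → ℝ))
    (C : Fin L → Finset (Fin n))
    (hCne : ∀ ℓ', (C ℓ').Nonempty)
    (φ₁ φ₂ : (Fin m → ℝ) → ℝ)
    (hφ₁ : ConvexOn ℝ Set.univ φ₁) (hφ₂ : ConvexOn ℝ Set.univ φ₂)
    (haff₁ : ∀ ℓ', ∃ (a : Fin m → ℝ) (c : ℝ),
      ∀ p ∈ convexHull ℝ (b '' ↑(C ℓ')), φ₁ p = a ⬝ᵥ p + c)
    (haff₂ : ∀ ℓ', ∃ (a : Fin m → ℝ) (c : ℝ),
      ∀ p ∈ convexHull ℝ (b '' ↑(C ℓ')), φ₂ p = a ⬝ᵥ p + c)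
    (xstar : (Fin m → ℝ) → ℝ) (hxstar : ∀ p, xstar p = φ₁ p - φ₂ p) :
    ∃ (u v : Fin L → (Fin m → ℝ)) (z : Fin n → ℝ) (r : Fin L → Fin n),
      (∀ ℓ', r ℓ' ∈ C ℓ') ∧
      (∀ i j : Fin n, ∀ ℓ', j ∈ C ℓ' →
        u ℓ' ⬝ᵥ (b i - b j) + xstar (b j) + z j ≤ xstar (b i) + z i ∧
        v ℓ' ⬝ᵥ (b i - b j) + z j ≤ z i) ∧
      (∀ ℓ', ∀ p ∈ convexHull ℝ (b '' ↑(C ℓ')),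
        (Finset.univ.sup' (Finset.univ_nonempty_iff.mpr ⟨⟨0, hL⟩⟩)
            (fun ℓ'' => u ℓ'' ⬝ᵥ (p - b (r ℓ'')) + xstar (b (r ℓ'')) + z (r ℓ'')))
          - (Finset.univ.sup' (Finset.univ_nonempty_iff.mpr ⟨⟨0, hL⟩⟩)
            (fun ℓ'' => v ℓ'' ⬝ᵥ (p - b (r ℓ'')) + z (r ℓ'')))
        = xstar p) := by
  choose u hu using fun ℓ => hφ₁.exists_dotProduct_hasSubgradientAt_convexHull (hCne ℓ) (haff₁ ℓ)
  choose v hv using fun ℓ => hφ₂.exists_dotProduct_hasSubgradientAt_convexHull (hCne ℓ) (haff₂ ℓ)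
  choose r hr using hCne
  have hmem {ℓ j} (hj : j ∈ C ℓ) : b j ∈ convexHull ℝ (b '' C ℓ) :=
    subset_convexHull ℝ _ (mem_image_of_mem b hj)
  refine ⟨u, v, fun i => φ₂ (b i), r, hr, fun i j ℓ hj => ?_, fun ℓ p hp => ?_⟩
  · have hu' := hu ℓ _ (hmem hj) (b i)
    have hv' := hv ℓ _ (hmem hj) (b i)
    simp only [dotProductEquiv_apply_apply] at hu' hv'
    simp only [hxstar]
    constructor <;> linarith
  · simp only [hxstar, ← add_sub_assoc, sub_add_cancel]
    exact congrArg₂ (· - ·)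
      (Finset.sup'_apply_sub_add_eq_of_hasSubgradientAt _ (fun ℓ _ => hu ℓ _ (hmem (hr ℓ)))
        (Finset.mem_univ ℓ) (hu ℓ p hp))
      (Finset.sup'_apply_sub_add_eq_of_hasSubgradientAt _ (fun ℓ _ => hv ℓ _ (hmem (hr ℓ)))
        (Finset.mem_univ ℓ) (hv ℓ p hp))

/-- Theorem 1 of the paper in composite form: the training inequality system has a
feasible solution and the resulting PLDC policy recovers the optimal-solution map `xstar`
on the convex hull of each cell of training right-hand sides. -/
theorem stmt_3 (m n L : ℕ) (hL : 0 < L)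
    (b : Fin n → (Fin m → ℝ))
    (C : Fin L → Finset (Fin n))
    (hCne : ∀ ℓ', (C ℓ').Nonempty)
    (hpart : ∀ i : Fin n, ∃! ℓ', i ∈ C ℓ')
    (φ₁ φ₂ : (Fin m → ℝ) → ℝ)
    (hφ₁ : ConvexOn ℝ Set.univ φ₁) (hφ₂ : ConvexOn ℝ Set.univ φ₂)
    (haff₁ : ∀ ℓ', ∃ (a : Fin m → ℝ) (c : ℝ),
      ∀ p ∈ convexHull ℝ (b '' ↑(C ℓ')), φ₁ p = a ⬝ᵥ p + c)
    (haff₂ : ∀ ℓ', ∃ (a : Fin m → ℝ) (c : ℝ),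
      ∀ p ∈ convexHull ℝ (b '' ↑(C ℓ')), φ₂ p = a ⬝ᵥ p + c)
    (xstar : (Fin m → ℝ) → ℝ) (hxstar : ∀ p, xstar p = φ₁ p - φ₂ p) :
    ∃ (u v : Fin L → (Fin m → ℝ)) (z : Fin n → ℝ) (r : Fin L → Fin n),
      (∀ ℓ', r ℓ' ∈ C ℓ') ∧
      (∀ i j : Fin n, ∀ ℓ', j ∈ C ℓ' →
        u ℓ' ⬝ᵥ (b i - b j) + xstar (b j) + z j ≤ xstar (b i) + z i ∧
        v ℓ' ⬝ᵥ (b i - b j) + z j ≤ z i) ∧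
      (∀ ℓ', ∀ p ∈ convexHull ℝ (b '' ↑(C ℓ')),
        (Finset.univ.sup' (Finset.univ_nonempty_iff.mpr ⟨⟨0, hL⟩⟩)
            (fun ℓ'' => u ℓ'' ⬝ᵥ (p - b (r ℓ'')) + xstar (b (r ℓ'')) + z (r ℓ'')))
          - (Finset.univ.sup' (Finset.univ_nonempty_iff.mpr ⟨⟨0, hL⟩⟩)
            (fun ℓ'' => v ℓ'' ⬝ᵥ (p - b (r ℓ'')) + z (r ℓ'')))
        = xstar p) :=
  stmt_3_general m n L hL b C hCne φ₁ φ₂ hφ₁ hφ₂ haff₁ haff₂ xstar hxstar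
end

section
/- Let g : ℝ^m → ℝ be a convex function and let S ⊆ ℝ^m be a nonempty convex set on which g is affine, i.e., there exist a ∈ ℝ^m and c ∈ ℝ with g(b) = ⟨a, b⟩ + c for all b ∈ S. Then there exists a single vector u ∈ ℝ^m that is a subgradient of g at every point of S; that is, g(y) ≥ g(b) + ⟨u, y − b⟩ for every b ∈ S and every y ∈ ℝ^m. -/
open Matrix

-- extend segment slightly beyond an intrinsic-interior point
lemma my_exists_extend {m : ℕ} {S : Set (Fin m → ℝ)} {b0 b : Fin m → ℝ}
    (h0 : b0 ∈ intrinsicInterior ℝ S) (hb : b ∈ S) :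
    ∃ ε : ℝ, 0 < ε ∧ b0 + ε • (b0 - b) ∈ S := by
  obtain ⟨y0, hy0, hy0e⟩ := h0
  have hb0span : b0 ∈ affineSpan ℝ S := by rw [← hy0e]; exact y0.2
  have hbspan : b ∈ affineSpan ℝ S := subset_affineSpan ℝ S hb
  have hmem : ∀ t : ℝ, b + t • (b0 - b) ∈ affineSpan ℝ S := by
    intro t
    have := AffineMap.lineMap_mem t hbspan hb0span
    rwa [AffineMap.lineMap_apply_module', add_comm] at this
  set ψ : ℝ → affineSpan ℝ S := fun t => ⟨b + t • (b0 - b), hmem t⟩ with hψ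
  have hcont : Continuous ψ :=
    Continuous.subtype_mk (continuous_const.add (continuous_id.smul continuous_const)) _
  have hψ1 : ψ 1 = y0 := by
    apply Subtype.ext
    simp [ψ, hy0e.symm]
  have hopen : IsOpen (ψ ⁻¹' interior (((↑) : affineSpan ℝ S → _) ⁻¹' S)) :=
    isOpen_interior.preimage hcont
  have h1 : (1:ℝ) ∈ ψ ⁻¹' interior (((↑) : affineSpan ℝ S → _) ⁻¹' S) := by
    simp only [Set.mem_preimage, hψ1]; exact hy0
  obtain ⟨δ, hδ, hball⟩ := Metric.isOpen_iff.1 hopen 1 h1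
  refine ⟨δ/2, by linarith, ?_⟩
  have hmem2 : (1 + δ/2) ∈ ψ ⁻¹' interior (((↑) : affineSpan ℝ S → _) ⁻¹' S) := by
    apply hball
    rw [Metric.mem_ball, Real.dist_eq]
    rw [show (1 + δ/2 - 1 : ℝ) = δ/2 by ring, abs_of_nonneg (by linarith)]
    linarith
  have : (ψ (1 + δ/2) : Fin m → ℝ) ∈ S := Set.mem_preimage.1 (interior_subset (Set.mem_preimage.1 hmem2))
  have heq : b + (1 + δ/2) • (b0 - b) = b0 + (δ/2) • (b0 - b) := by
    module
  rwa [show (ψ (1 + δ/2) : Fin m → ℝ) = b + (1 + δ/2) • (b0 - b) from rfl, heq] at this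


lemma my_exists_subgrad {m : ℕ} {g : (Fin m → ℝ) → ℝ} (hg : ConvexOn ℝ Set.univ g)
    (b0 : Fin m → ℝ) : ∃ u : Fin m → ℝ, ∀ y, g y ≥ g b0 + u ⬝ᵥ (y - b0) := by
  have cont : Continuous g := hg.locallyLipschitz.continuous
  set s : Set ((Fin m → ℝ) × ℝ) := {p | g p.1 < p.2} with hs
  have hopen : IsOpen s := isOpen_lt (cont.comp continuous_fst) continuous_snd
  have hconv : Convex ℝ s := by
    rintro ⟨x1, t1⟩ h1 ⟨x2, t2⟩ h2 α β hα hβ hαβ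
    simp only [hs, Set.mem_setOf_eq] at h1 h2
    simp only [hs, Prod.smul_mk, Prod.mk_add_mk, Set.mem_setOf_eq, smul_eq_mul]
    have hle := hg.2 (Set.mem_univ x1) (Set.mem_univ x2) hα hβ hαβ
    simp only [smul_eq_mul] at hle
    rcases hα.eq_or_lt with rfl | hα'
    · simp only [zero_add] at hαβ
      subst hαβ
      simpa using h2
    · have h3 : α * g x1 < α * t1 := (mul_lt_mul_iff_right₀ hα').2 h1
      have h4 : β * g x2 ≤ β * t2 := mul_le_mul_of_nonneg_left h2.le hβ
      linarith
  have hnot : (b0, g b0) ∉ s := by simp [hs]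
  obtain ⟨f, hf⟩ := geometric_hahn_banach_open_point hconv hopen hnot
  -- decompose f
  set L : (Fin m → ℝ) →ₗ[ℝ] ℝ :=
    { toFun := fun x => f (x, 0)
      map_add' := by
        intro x y
        show f (x + y, 0) = f (x, 0) + f (y, 0)
        rw [show ((x + y, (0:ℝ)) : (Fin m → ℝ) × ℝ) = (x, 0) + (y, 0) by simp [Prod.ext_iff],
          f.map_add]
      map_smul' := by
        intro r x
        show f (r • x, 0) = r • f (x, 0)
        rw [show ((r • x, (0:ℝ)) : (Fin m → ℝ) × ℝ) = r • (x, 0) by simp [Prod.ext_iff],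
          f.map_smul] } with hL
  set β : ℝ := f (0, 1) with hβdef
  have key : ∀ (x : Fin m → ℝ) (t : ℝ), f (x, t) = L x + t * β := by
    intro x t
    rw [show ((x, t) : (Fin m → ℝ) × ℝ) = (x, 0) + t • (0, 1) by simp [Prod.ext_iff], f.map_add,
      f.map_smul]
    rfl
  have hfb0 : ∀ p ∈ s, f p < L b0 + g b0 * β := by
    intro p hp; rw [← key]; exact hf p hp
  have hβ : β < 0 := by
    have := hfb0 (b0, g b0 + 1) (by simp [hs])
    rw [key] at this
    linarith
  have hsub : ∀ x, L x + g x * β ≤ L b0 + g b0 * β := by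
    intro x
    by_contra h
    push_neg at h
    set D := L x + g x * β - (L b0 + g b0 * β) with hD
    have hDpos : 0 < D := by simp [hD]; linarith
    set ε := D / (-β) with hε
    have hεpos : 0 < ε := div_pos hDpos (by linarith)
    have hεβ : ε * β = -D := by
      rw [hε, div_mul_eq_mul_div, mul_div_assoc, div_neg, div_self (ne_of_lt hβ), mul_neg,
        mul_one]
    have := hfb0 (x, g x + ε) (by simp [hs]; linarith)
    rw [key] at this
    nlinarith
  refine ⟨fun i => L (Pi.single i 1) / (-β), fun y => ?_⟩
  have hu : ∀ v : Fin m → ℝ, (fun i => L (Pi.single i 1) / (-β)) ⬝ᵥ v = L v / (-β) := by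
    intro v
    have hv : v = ∑ i, v i • (Pi.single i 1 : Fin m → ℝ) := by
      ext j
      simp [Pi.single_apply]
    conv_rhs => rw [hv]
    rw [map_sum]
    simp only [LinearMap.map_smul, smul_eq_mul]
    rw [Finset.sum_div]
    simp only [dotProduct]
    congr 1
    ext i
    ring
  rw [hu, ge_iff_le, L.map_sub]
  have h2 : (L y - L b0) / (-β) ≤ g y - g b0 := by
    rw [div_le_iff₀ (by linarith : (0:ℝ) < -β)]
    nlinarith [hsub y]
  linarith

/-- Scalar core of Lemma 1 of the paper: a real-valued convex function that is affine on a
nonempty convex set admits a common subgradient valid at every point of that set. -/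
theorem stmt_4 (m : ℕ) (g : (Fin m → ℝ) → ℝ) (hg : ConvexOn ℝ Set.univ g)
    (S : Set (Fin m → ℝ)) (hS : S.Nonempty) (hconv : Convex ℝ S)
    (a : Fin m → ℝ) (c : ℝ) (haff : ∀ b ∈ S, g b = a ⬝ᵥ b + c) :
    ∃ u : Fin m → ℝ, ∀ b ∈ S, ∀ y, g y ≥ g b + u ⬝ᵥ (y - b) := by
  obtain ⟨b0, hb0i⟩ := hS.intrinsicInterior hconv
  have hb0S : b0 ∈ S := intrinsicInterior_subset hb0i
  obtain ⟨u, hu⟩ := my_exists_subgrad hg b0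
  refine ⟨u, fun b hb y => ?_⟩
  -- equality of dot product along S
  have heq : u ⬝ᵥ (b - b0) = g b - g b0 := by
    have hle : g b0 + u ⬝ᵥ (b - b0) ≤ g b := hu b
    obtain ⟨ε, hε, hz⟩ := my_exists_extend hb0i hb
    have hz' := hu (b0 + ε • (b0 - b))
    have hdot : u ⬝ᵥ (b0 + ε • (b0 - b) - b0) = ε * (u ⬝ᵥ (b0 - b)) := by
      rw [show b0 + ε • (b0 - b) - b0 = ε • (b0 - b) by abel]
      rw [dotProduct_smul]
      rfl
    rw [hdot] at hz'
    have hgz : g (b0 + ε • (b0 - b)) = a ⬝ᵥ b0 + c + ε * (a ⬝ᵥ b0 - a ⬝ᵥ b) := by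
      rw [haff _ hz, dotProduct_add, dotProduct_smul, dotProduct_sub]
      simp [smul_eq_mul]
      ring
    have hgb0 : g b0 = a ⬝ᵥ b0 + c := haff _ hb0S
    have hgb : g b = a ⬝ᵥ b + c := haff _ hb
    -- from hz' : g z ≥ g b0 + ε * (u ⬝ᵥ (b0-b))
    have h1 : ε * (u ⬝ᵥ (b0 - b)) ≤ ε * (a ⬝ᵥ b0 - a ⬝ᵥ b) := by
      rw [hgz, hgb0] at hz'
      linarith
    have h2 : u ⬝ᵥ (b0 - b) ≤ a ⬝ᵥ b0 - a ⬝ᵥ b := le_of_mul_le_mul_left h1 hε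
    have h3 : u ⬝ᵥ (b0 - b) = - (u ⬝ᵥ (b - b0)) := by
      rw [show b0 - b = -(b - b0) by abel, dotProduct_neg]
    rw [h3] at h2
    linarith
  have hsplit : u ⬝ᵥ (y - b0) = u ⬝ᵥ (y - b) + u ⬝ᵥ (b - b0) := by
    rw [← dotProduct_add]
    congr 1
    abel
  have := hu y
  rw [hsplit, heq] at this
  linarith
end

section
/- Let g : ℝ^m → ℝ be a convex function and let S ⊆ ℝ^m be a nonempty convex set on which g is affine (g(b) = ⟨a, b⟩ + c for all b ∈ S, for some a ∈ ℝ^m, c ∈ ℝ). Let b₀ be a point of the intrinsic (relative) interior of S and let u be a subgradient of g at b₀. Then u is a subgradient of g at every point b ∈ S, i.e., g(y) ≥ g(b) + ⟨u, y − b⟩ for all y ∈ ℝ^m. -/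
open Matrix

set_option maxHeartbeats 1000000 in
set_option synthInstance.maxHeartbeats 400000 in

lemma key_extend {m : ℕ} (S : Set (Fin m → ℝ)) (b₀ b : Fin m → ℝ)
    (hb₀ : b₀ ∈ intrinsicInterior ℝ S) (hb : b ∈ S) :
    ∃ t : ℝ, t < 0 ∧ b₀ + t • (b - b₀) ∈ S := by
  haveI : Nonempty (affineSpan ℝ S) := ⟨⟨b, subset_affineSpan ℝ S hb⟩⟩
  obtain ⟨y, hy, rfl⟩ := mem_intrinsicInterior.1 hb₀
  set z : affineSpan ℝ S := ⟨b, subset_affineSpan ℝ S hb⟩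
  have hcont : Continuous fun t : ℝ => (AffineMap.lineMap y z t : affineSpan ℝ S) := by
    rw [continuous_induced_rng]
    have : (Subtype.val ∘ fun t : ℝ => (AffineMap.lineMap y z t : affineSpan ℝ S)) =
        fun t : ℝ => AffineMap.lineMap (y : Fin m → ℝ) (b : Fin m → ℝ) t := by
      funext t
      have h := (affineSpan ℝ S).subtype.apply_lineMap y z t
      simp only [AffineSubspace.subtype_apply] at h
      exact h.symm
    rw [this]
    exact AffineMap.lineMap_continuous
  have h0 : (AffineMap.lineMap y z (0 : ℝ)) ∈
      interior ((↑) ⁻¹' S : Set (affineSpan ℝ S)) := by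
    simpa using hy
  have hopen := (isOpen_interior.preimage hcont).mem_nhds h0
  obtain ⟨ε, hε, hball⟩ := Metric.mem_nhds_iff.1 hopen
  refine ⟨-(ε / 2), by linarith, ?_⟩
  have hmem : AffineMap.lineMap y z (-(ε / 2)) ∈
      interior ((↑) ⁻¹' S : Set (affineSpan ℝ S)) := by
    apply hball
    simp [Real.dist_eq, abs_of_nonneg, hε.le]
    linarith
  have := interior_subset hmem
  have hcoe : ((AffineMap.lineMap y z (-(ε / 2)) : affineSpan ℝ S) : Fin m → ℝ) =
      (y : Fin m → ℝ) + (-(ε / 2)) • (b - (y : Fin m → ℝ)) := by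
    have := ((affineSpan ℝ S).subtype.apply_lineMap y z (-(ε / 2)))
    simp only [AffineSubspace.subtype_apply] at this
    rw [this, AffineMap.lineMap_apply_module']
    module
  rw [Set.mem_preimage, hcoe] at this
  exact this

/-- Mechanism behind Lemma 1 of the paper: a subgradient of a convex function taken at a
relative-interior point of a convex set on which the function is affine is a valid
subgradient at every point of that set. -/
theorem stmt_5 (m : ℕ) (g : (Fin m → ℝ) → ℝ) (hg : ConvexOn ℝ Set.univ g)
    (S : Set (Fin m → ℝ)) (hS : S.Nonempty) (hconv : Convex ℝ S)
    (a : Fin m → ℝ) (c : ℝ) (haff : ∀ b ∈ S, g b = a ⬝ᵥ b + c)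
    (b₀ : Fin m → ℝ) (hb₀ : b₀ ∈ intrinsicInterior ℝ S)
    (u : Fin m → ℝ) (hu : ∀ y, g y ≥ g b₀ + u ⬝ᵥ (y - b₀)) :
    ∀ b ∈ S, ∀ y, g y ≥ g b + u ⬝ᵥ (y - b) := by
  intro b hb y
  have hb₀S : b₀ ∈ S := intrinsicInterior_subset hb₀
  obtain ⟨t, ht, hz⟩ := key_extend S b₀ b hb₀ hb
  set z := b₀ + t • (b - b₀) with hzdef
  -- evaluate subgradient inequality at z
  have h1 : g z ≥ g b₀ + u ⬝ᵥ (z - b₀) := hu z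
  have hz_sub : z - b₀ = t • (b - b₀) := by simp [hzdef]
  have hgz : g z = g b₀ + t * (a ⬝ᵥ (b - b₀)) := by
    rw [haff z hz, haff b₀ hb₀S]
    have : a ⬝ᵥ z = a ⬝ᵥ b₀ + t * (a ⬝ᵥ (b - b₀)) := by
      simp [hzdef, dotProduct_add, dotProduct_smul, smul_eq_mul]
    rw [this]; ring
  have hdz : u ⬝ᵥ (z - b₀) = t * (u ⬝ᵥ (b - b₀)) := by
    rw [hz_sub, dotProduct_smul, smul_eq_mul]
  rw [hgz, hdz] at h1
  have hkey : a ⬝ᵥ (b - b₀) ≤ u ⬝ᵥ (b - b₀) := by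
    have : t * (u ⬝ᵥ (b - b₀)) ≤ t * (a ⬝ᵥ (b - b₀)) := by linarith
    exact le_of_mul_le_mul_left (by linarith [this]) (by linarith : (0:ℝ) < -t) |>.trans_eq rfl
  have hgb : g b = g b₀ + a ⬝ᵥ (b - b₀) := by
    rw [haff b hb, haff b₀ hb₀S, dotProduct_sub]; ring
  have h2 := hu y
  have hysplit : u ⬝ᵥ (y - b₀) = u ⬝ᵥ (y - b) + u ⬝ᵥ (b - b₀) := by
    rw [← dotProduct_add]; congr 1; abel
  rw [hysplit] at h2
  rw [hgb]
  linarith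
end
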